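/- arXiv:2207.04774 — 4 statements merged into one kernel-verified Lean document; each statement's English description precedes it below -/
import Mathlib

section
/- Let E_1,…,E_K be independent random variables on a probability space, with E_k exponentially distributed with rate y_k for each k. Then for every real t ≥ 0, the probability that there exists an item i ∈ {1,…,q} with (y_k/u_{k,i})·E_k ≥ t for every k with u_{k,i} > 0 is at most q·e^{-t}. -/
/-!
For a fixed item `i`, the event is the intersection over the `k` with `u k i > 0` of the events
`E k ≥ t * u k i / y k`. By independence and the exponential tail `P(E k ≥ x) = exp (-(y k * x))`
it has probability `∏ k, exp (-(t * u k i)) = exp (-t)`, since the column `u · i` sums to `1`.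
A union bound over the `q` items finishes the proof.
-/

open MeasureTheory ProbabilityTheory Real

namespace ProbabilityTheory

lemma expMeasure_Ici {r x : ℝ} (hr : 0 < r) (hx : 0 ≤ x) :
    expMeasure r (Set.Ici x) = ENNReal.ofReal (exp (-(r * x))) := by
  have := isProbabilityMeasure_expMeasure hr
  have : NullSingletonClass (expMeasure r) := by
    unfold expMeasure gammaMeasure; infer_instance
  rw [← measure_congr Ioi_ae_eq_Ici, ← Set.compl_Iic, prob_compl_eq_one_sub measurableSet_Iic,
    ← ofReal_cdf, cdf_expMeasure_eq hr, if_pos hx, ← ENNReal.ofReal_one,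
    ← ENNReal.ofReal_sub _ (sub_nonneg.2 (exp_le_one_iff.2 (by nlinarith))),
    sub_sub_cancel]

lemma iIndepFun.measure_forall_mem_le_of_expMeasure {Ω ι : Type*} [MeasurableSpace Ω]
    {μ : Measure Ω} {E : ι → Ω → ℝ} (hindep : iIndepFun E μ) {r : ι → ℝ} (s : Finset ι)
    (hr : ∀ k ∈ s, 0 < r k) (hlaw : ∀ k ∈ s, μ.map (E k) = expMeasure (r k))
    {c : ι → ℝ} (hc : ∀ k ∈ s, 0 ≤ c k) :
    μ {ω | ∀ k ∈ s, c k ≤ E k ω} = ENNReal.ofReal (exp (-∑ k ∈ s, r k * c k)) := by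
  have hset : {ω | ∀ k ∈ s, c k ≤ E k ω} = ⋂ k ∈ s, E k ⁻¹' Set.Ici (c k) := by
    ext; simp
  have hfactor : ∀ k ∈ s, μ (E k ⁻¹' Set.Ici (c k)) = ENNReal.ofReal (exp (-(r k * c k))) := by
    intro k hk
    have := isProbabilityMeasure_expMeasure (hr k hk)
    have hE : AEMeasurable (E k) μ :=
      .of_map_ne_zero (by rw [hlaw k hk]; exact IsProbabilityMeasure.ne_zero _)
    rw [← Measure.map_apply_of_aemeasurable hE measurableSet_Ici, hlaw k hk,
      expMeasure_Ici (hr k hk) (hc k hk)]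
  rw [hset, hindep.measure_inter_preimage_eq_mul s fun _ _ ↦ measurableSet_Ici,
    Finset.prod_congr rfl hfactor, ← ENNReal.ofReal_prod_of_nonneg fun _ _ ↦ (exp_pos _).le,
    ← exp_sum, Finset.sum_neg_distrib]

lemma iIndepFun.measure_forall_pos_le_div_mul_eq_exp_neg {Ω ι : Type*} [MeasurableSpace Ω]
    [Fintype ι] {μ : Measure Ω} {E : ι → Ω → ℝ} (hindep : iIndepFun E μ) {y : ι → ℝ}
    (hy : ∀ k, 0 < y k) (hlaw : ∀ k, μ.map (E k) = expMeasure (y k)) {u : ι → ℝ}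
    (hu_nonneg : ∀ k, 0 ≤ u k) (hu_sum : ∑ k, u k = 1) {t : ℝ} (ht : 0 ≤ t) :
    μ {ω | ∀ k, 0 < u k → t ≤ y k / u k * E k ω} = ENNReal.ofReal (exp (-t)) := by
  set s := Finset.univ.filter fun k ↦ 0 < u k
  have hset : {ω | ∀ k, 0 < u k → t ≤ y k / u k * E k ω}
      = {ω | ∀ k ∈ s, t * u k / y k ≤ E k ω} := by
    ext ω
    refine forall_congr' fun k ↦ ?_
    simp only [s, Finset.mem_filter, Finset.mem_univ, true_and]
    refine imp_congr_right fun hu ↦ ?_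
    rw [div_le_iff₀ (hy k), div_mul_eq_mul_div, le_div_iff₀ hu, mul_comm (E k ω)]
  have hsum : ∑ k ∈ s, y k * (t * u k / y k) = t := by
    have hu_filter : ∑ k ∈ s, u k = 1 :=
      hu_sum ▸ Finset.sum_filter_of_ne fun k _ hk ↦ (hu_nonneg k).lt_of_ne' hk
    simp_rw [mul_div_cancel₀ _ (hy _).ne', ← Finset.mul_sum, hu_filter, mul_one]
  rw [hset, hindep.measure_forall_mem_le_of_expMeasure s (fun k _ ↦ hy k) (fun k _ ↦ hlaw k)
    fun k _ ↦ div_nonneg (mul_nonneg ht (hu_nonneg k)) (hy k).le, hsum]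

end ProbabilityTheory

theorem stmt_1_general
    {Ω : Type*} [MeasurableSpace Ω] {μ : Measure Ω}
    (q K : ℕ)
    (u : Fin K → Fin q → ℝ) (hu_nonneg : ∀ k i, 0 ≤ u k i)
    (hu_sum : ∀ i, ∑ k, u k i = 1)
    (y : Fin K → ℝ)
    (hy_pos : ∀ k, 0 < y k)
    (E : Fin K → Ω → ℝ)
    (hindep : iIndepFun E μ)
    (hlaw : ∀ k, μ.map (E k) = expMeasure (y k))
    (t : ℝ) (ht : 0 ≤ t) :
    μ {ω | ∃ i, ∀ k, 0 < u k i → t ≤ (y k / u k i) * E k ω}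
      ≤ ENNReal.ofReal (q * Real.exp (-t)) := by
  calc μ {ω | ∃ i, ∀ k, 0 < u k i → t ≤ (y k / u k i) * E k ω}
      = μ (⋃ i, {ω | ∀ k, 0 < u k i → t ≤ (y k / u k i) * E k ω}) := by
        rw [Set.ofPred_exists]
    _ ≤ ∑ i, μ {ω | ∀ k, 0 < u k i → t ≤ (y k / u k i) * E k ω} := measure_iUnion_fintype_le _ _
    _ = ∑ _i : Fin q, ENNReal.ofReal (exp (-t)) := by
        refine Finset.sum_congr rfl fun i _ ↦ ?_
        exact hindep.measure_forall_pos_le_div_mul_eq_exp_neg hy_pos hlaw (hu_nonneg · i)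
          (hu_sum i) ht
    _ = ENNReal.ofReal (q * exp (-t)) := by
        rw [Finset.sum_const, Finset.card_univ, Fintype.card_fin, nsmul_eq_mul,
          ENNReal.ofReal_mul (by positivity), ENNReal.ofReal_natCast]

/-- the probability that some item is still "waiting" at time `t`
(i.e. sees no FC open by time `t` on its dilated time scale) is at most `q·e^{-t}`. -/
theorem stmt_1
    {Ω : Type*} [MeasurableSpace Ω] {μ : Measure Ω} [IsProbabilityMeasure μ]
    (q K : ℕ) (hq : 0 < q) (hK : 0 < K)
    (u : Fin K → Fin q → ℝ) (hu_nonneg : ∀ k i, 0 ≤ u k i)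
    (hu_sum : ∀ i, ∑ k, u k i = 1)
    (y : Fin K → ℝ)
    (hy : ∀ k, y k = Finset.univ.sup' (Finset.univ_nonempty_iff.mpr ⟨⟨0, hq⟩⟩) (u k))
    (hy_pos : ∀ k, 0 < y k)
    (E : Fin K → Ω → ℝ) (hmeas : ∀ k, Measurable (E k))
    (hindep : iIndepFun E μ)
    (hlaw : ∀ k, μ.map (E k) = expMeasure (y k))
    (t : ℝ) (ht : 0 ≤ t) :
    μ {ω | ∃ i, ∀ k, 0 < u k i → t ≤ (y k / u k i) * E k ω}
      ≤ ENNReal.ofReal (q * Real.exp (-t)) :=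
  stmt_1_general q K u hu_nonneg hu_sum y hy_pos E hindep hlaw t ht
end

section
/- Let d and K be integers with 1 ≤ d ≤ K. On a probability space, let Y_1,…,Y_K be random variables taking values in {0,1} such that for every subset T ⊆ {1,…,K} with |T| = d, almost surely ∑_{k ∈ T} Y_k ≥ 1. If α ≥ 0 satisfies E[Y_k] ≤ α/d for every k ∈ {1,…,K}, then α ≥ d·(1 − d/K). -/
/-!
Call `k` closed at `ω` when `Y k ω = 0`. Since every `d`-set of centres contains an open one,
fewer than `d` centres are closed, so almost surely `∑ k, Y k ≥ K - d + 1`. Taking expectations,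
`K - d + 1 ≤ K α / d`, which rearranges to `α ≥ d (K - d + 1) / K ≥ d (1 - d / K)`.
-/

open MeasureTheory Finset

section Covering

variable {ι : Type*} [Fintype ι] {y : ι → ℝ} {d : ℕ}

lemma card_filter_eq_zero_lt (hcov : ∀ T : Finset ι, #T = d → 1 ≤ ∑ i ∈ T, y i) :
    #{i | y i = 0} < d := by
  by_contra! h
  obtain ⟨T, hTzero, hTcard⟩ := exists_subset_card_eq h
  have hsum : ∑ i ∈ T, y i = 0 := sum_eq_zero fun i hi => (mem_filter.1 (hTzero hi)).2
  linarith [hcov T hTcard]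

lemma sum_eq_card_filter_ne_zero (h01 : ∀ i, y i = 0 ∨ y i = 1) :
    ∑ i, y i = #{i | y i ≠ 0} := by
  rw [← sum_boole]
  refine sum_congr rfl fun i _ => ?_
  rcases h01 i with h | h <;> simp [h]

lemma card_sub_add_one_le_sum (h01 : ∀ i, y i = 0 ∨ y i = 1)
    (hcov : ∀ T : Finset ι, #T = d → 1 ≤ ∑ i ∈ T, y i) :
    (Fintype.card ι : ℝ) - d + 1 ≤ ∑ i, y i := by
  have hclosed : (#{i | y i = 0} : ℝ) + 1 ≤ d := by exact_mod_cast card_filter_eq_zero_lt hcov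
  have hsplit : (#{i | y i = 0} : ℝ) + #{i | y i ≠ 0} = Fintype.card ι := by
    exact_mod_cast card_filter_add_card_filter_not (s := univ) (fun i => y i = 0)
  rw [sum_eq_card_filter_ne_zero h01]
  linarith

end Covering

lemma integrable_of_forall_eq_zero_or_eq_one {Ω : Type*} [MeasurableSpace Ω] {μ : Measure Ω}
    [IsFiniteMeasure μ] {f : Ω → ℝ} (hf : Measurable f) (h01 : ∀ ω, f ω = 0 ∨ f ω = 1) :
    Integrable f μ :=
  .of_bound hf.aestronglyMeasurable 1 <| .of_forall fun ω => by rcases h01 ω with h | h <;> simp [h]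

lemma mul_one_sub_div_le_of_sub_add_one_le_mul_div {d K α : ℝ} (hd : 0 ≤ d) (hdK : d ≤ K)
    (h : K - d + 1 ≤ K * (α / d)) : d * (1 - d / K) ≤ α := by
  rcases hd.eq_or_lt with rfl | hd
  · rw [div_zero, mul_zero] at h
    linarith
  have hK : 0 < K := hd.trans_le hdK
  have h' : d * (K - d + 1) ≤ K * α := by
    calc d * (K - d + 1) ≤ d * (K * (α / d)) := by gcongr
      _ = K * α := by field_simp
  calc d * (1 - d / K) = d * (K - d) / K := by field_simp
    _ ≤ K * α / K := div_le_div_of_nonneg_right (by linarith) hK.le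
    _ = α := by field_simp

theorem stmt_13_general
    {Ω : Type*} [MeasurableSpace Ω] {μ : Measure Ω} [IsProbabilityMeasure μ]
    (d K : ℕ) (hdK : d ≤ K)
    (Y : Fin K → Ω → ℝ) (hmeas : ∀ k, Measurable (Y k))
    (h01 : ∀ k ω, Y k ω = 0 ∨ Y k ω = 1)
    (hcov : ∀ T : Finset (Fin K), T.card = d → ∀ᵐ ω ∂μ, 1 ≤ ∑ k ∈ T, Y k ω)
    (α : ℝ)
    (hE : ∀ k, ∫ ω, Y k ω ∂μ ≤ α / d) :
    (d : ℝ) * (1 - (d : ℝ) / (K : ℝ)) ≤ α := by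
  have hint k : Integrable (Y k) μ := integrable_of_forall_eq_zero_or_eq_one (hmeas k) (h01 k)
  have hcov_ae : ∀ᵐ ω ∂μ, ∀ T ∈ univ.powersetCard d, 1 ≤ ∑ k ∈ T, Y k ω :=
    (Filter.eventually_all_finset _).2 fun T hT => hcov T (mem_powersetCard.1 hT).2
  have hsum : ∀ᵐ ω ∂μ, (K : ℝ) - d + 1 ≤ ∑ k, Y k ω := hcov_ae.mono fun ω hω => by
    simpa using card_sub_add_one_le_sum (h01 · ω) fun T hT => hω T (by simpa using hT)
  refine mul_one_sub_div_le_of_sub_add_one_le_mul_div d.cast_nonneg (by exact_mod_cast hdK) ?_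
  calc (K : ℝ) - d + 1 ≤ ∫ ω, ∑ k, Y k ω ∂μ := by
        simpa using integral_mono_ae (integrable_const _) (integrable_finsetSum _ fun k _ => hint k) hsum
    _ = ∑ k, ∫ ω, Y k ω ∂μ := integral_finsetSum _ fun k _ => hint k
    _ ≤ ∑ _k : Fin K, α / d := sum_le_sum fun k _ => hE k
    _ = K * (α / d) := by simp

/-- lower bound for covering schemes. If `Y_1,…,Y_K ∈ {0,1}` cover
every `d`-subset almost surely and `E[Y_k] ≤ α/d` for all `k`, then
`α ≥ d·(1 − d/K)`. -/
theorem stmt_13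
    {Ω : Type*} [MeasurableSpace Ω] {μ : Measure Ω} [IsProbabilityMeasure μ]
    (d K : ℕ) (hd : 1 ≤ d) (hdK : d ≤ K)
    (Y : Fin K → Ω → ℝ) (hmeas : ∀ k, Measurable (Y k))
    (h01 : ∀ k ω, Y k ω = 0 ∨ Y k ω = 1)
    (hcov : ∀ T : Finset (Fin K), T.card = d → ∀ᵐ ω ∂μ, 1 ≤ ∑ k ∈ T, Y k ω)
    (α : ℝ) (hα : 0 ≤ α)
    (hE : ∀ k, ∫ ω, Y k ω ∂μ ≤ α / d) :
    (d : ℝ) * (1 - (d : ℝ) / (K : ℝ)) ≤ α :=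
  stmt_13_general d K hdK Y hmeas h01 hcov α hE
end

section
/- Let d and K be integers with 1 ≤ d ≤ K. On a probability space, for each d-element subset T ⊆ {1,…,K} let Z_T be a random variable with values in {1,…,K} such that almost surely Z_T ∈ T, and P(Z_T = k) = 1/d for every k ∈ T. If α ≥ 0 satisfies P(∃ T : Z_T = k) ≤ α/d for every k ∈ {1,…,K}, then α ≥ d·(1 − d/K). In particular, an α-competitive rounding scheme for instances of sparsity d must have α ≥ d (letting K → ∞). -/
open MeasureTheory ProbabilityTheory
open scoped ENNReal

/-- lower bound for rounding schemes on instances of sparsity `d`.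
The items are the `d`-element subsets `T` of the `K` centers, with marginals
`1/d` on each `k ∈ T`; if each center is used with probability at most `α/d`,
then `α ≥ d·(1 − d/K)`. -/
theorem stmt_14
    {Ω : Type*} [MeasurableSpace Ω] {μ : Measure Ω} [IsProbabilityMeasure μ]
    (d K : ℕ) (hd : 1 ≤ d) (hdK : d ≤ K)
    (Z : {T : Finset (Fin K) // T.card = d} → Ω → Fin K)
    (hmeas : ∀ T, Measurable (Z T))
    (hmem : ∀ T, ∀ᵐ ω ∂μ, Z T ω ∈ T.1)
    (hmarg : ∀ T, ∀ k ∈ T.1, μ {ω | Z T ω = k} = ENNReal.ofReal (1 / (d : ℝ)))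
    (α : ℝ) (hα : 0 ≤ α)
    (hused : ∀ k : Fin K, μ {ω | ∃ T, Z T ω = k} ≤ ENNReal.ofReal (α / d)) :
    (d : ℝ) * (1 - (d : ℝ) / (K : ℝ)) ≤ α := by
  classical
  set A : Fin K → Set Ω := fun k => {ω | ∃ T, Z T ω = k} with hA
  have hAmeas : ∀ k, MeasurableSet (A k) := by
    intro k
    have : A k = ⋃ T, Z T ⁻¹' {k} := by
      ext ω; simp [hA, Set.mem_iUnion]
    rw [this]
    exact MeasurableSet.iUnion fun T => (hmeas T) (measurableSet_singleton k)
  have hae : ∀ᵐ ω ∂μ, ∀ T, Z T ω ∈ T.1 := ae_all_iff.2 hmem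
  -- pointwise cardinality bound on the set of unused centers
  have hcard : ∀ ω, (∀ T, Z T ω ∈ T.1) →
      ((Finset.univ.filter (fun k => ω ∉ A k)).card : ℝ≥0∞) ≤ (d : ℝ≥0∞) := by
    intro ω hω
    have : (Finset.univ.filter (fun k => ω ∉ A k)).card < d := by
      by_contra h
      push_neg at h
      obtain ⟨T, hTsub, hTcard⟩ := Finset.exists_subset_card_eq h
      have hmemT := hω ⟨T, hTcard⟩
      have hk := hTsub hmemT
      rw [Finset.mem_filter] at hk
      exact hk.2 ⟨⟨T, hTcard⟩, rfl⟩
    exact_mod_cast this.le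
  -- sum of measures of complements is ≤ d
  have hsumc : ∑ k : Fin K, μ (A k)ᶜ ≤ (d : ℝ≥0∞) := by
    have h1 : ∑ k : Fin K, μ (A k)ᶜ
        = ∫⁻ ω, ∑ k : Fin K, ((A k)ᶜ).indicator (1 : Ω → ℝ≥0∞) ω ∂μ := by
      rw [lintegral_finset_sum]
      · refine Finset.sum_congr rfl fun k _ => ?_
        exact (lintegral_indicator_one (hAmeas k).compl).symm
      · intro k _
        exact measurable_const.indicator (hAmeas k).compl
    rw [h1]
    have h2 : ∫⁻ ω, ∑ k : Fin K, ((A k)ᶜ).indicator (1 : Ω → ℝ≥0∞) ω ∂μ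
        ≤ ∫⁻ _, (d : ℝ≥0∞) ∂μ := by
      refine lintegral_mono_ae ?_
      filter_upwards [hae] with ω hω
      have : ∑ k : Fin K, ((A k)ᶜ).indicator (1 : Ω → ℝ≥0∞) ω
          = ((Finset.univ.filter (fun k => ω ∉ A k)).card : ℝ≥0∞) := by
        rw [Finset.card_filter]
        push_cast
        refine Finset.sum_congr rfl fun k _ => ?_
        by_cases h : ω ∈ A k <;> simp [Set.indicator_apply, h]
      rw [this]
      exact hcard ω hω
    simpa using h2
  -- pass to real numbers
  have hd' : (0:ℝ) < d := by exact_mod_cast hd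
  have hK' : (0:ℝ) < K := by exact_mod_cast lt_of_lt_of_le hd hdK
  set p : Fin K → ℝ := fun k => (μ (A k)).toReal with hp
  have hsplit : ∀ k, p k = 1 - (μ (A k)ᶜ).toReal := by
    intro k
    have := prob_compl_eq_one_sub (μ := μ) (hAmeas k)
    rw [hp]
    have h1 : (μ (A k)ᶜ).toReal = (1 - μ (A k)).toReal := by rw [this]
    rw [h1, ENNReal.toReal_sub_of_le prob_le_one (by simp)]
    simp
  have hqsum : ∑ k : Fin K, (μ (A k)ᶜ).toReal ≤ (d : ℝ) := by
    have := ENNReal.toReal_mono (by simp) hsumc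
    rwa [ENNReal.toReal_sum (fun k _ => measure_ne_top μ _), ENNReal.toReal_natCast] at this
  have hpsum : (K : ℝ) - d ≤ ∑ k : Fin K, p k := by
    have : ∑ k : Fin K, p k = (K : ℝ) - ∑ k : Fin K, (μ (A k)ᶜ).toReal := by
      simp [hsplit, Finset.sum_sub_distrib]
    rw [this]
    linarith
  have hpk : ∀ k, p k ≤ α / d := by
    intro k
    have := ENNReal.toReal_mono (by simp) (hused k)
    rwa [ENNReal.toReal_ofReal (div_nonneg hα hd'.le)] at this
  have hub : ∑ k : Fin K, p k ≤ (K : ℝ) * (α / d) := by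
    calc ∑ k : Fin K, p k ≤ ∑ _k : Fin K, (α / d) := Finset.sum_le_sum fun k _ => hpk k
      _ = (K : ℝ) * (α / d) := by simp [mul_comm]
  have hmain : (K : ℝ) - d ≤ (K : ℝ) * (α / d) := le_trans hpsum hub
  have h1 := mul_le_mul_of_nonneg_right hmain hd'.le
  have h2 : (K:ℝ) * (α / d) * d = K * α := by field_simp
  have h3 : (d:ℝ) / K * K = d := div_mul_cancel₀ _ hK'.ne'
  nlinarith [h1, h2, h3, mul_pos hd' hK']
end

section
/- Let q, K ≥ 1 be integers, let U_1,…,U_K be subsets of {1,…,q}, and let y_1,…,y_K be nonnegative reals with ∑_{k : i ∈ U_k} y_k ≥ 1 for every item i ∈ {1,…,q}. Then there exist a probability space and random variables Y_1,…,Y_K taking values in {0,1} such that: (a) almost surely, for every item i there exists k with i ∈ U_k and Y_k = 1 (the random collection is a feasible set cover); and (b) E[Y_k] ≤ (1 + ln q)·y_k for every k. -/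
/-!
Two-round randomized rounding. First select every set `k` independently with probability
`min 1 (c y_k)`; then every item `i` that is still uncovered selects one set containing it, set `k`
with probability `y_k / ∑_{k ∋ i} y_k ≤ y_k`. Item `i` is missed by the first round with
probability `∏_{k ∋ i} (1 - min 1 (c y_k)) ≤ exp (-c ∑_{k ∋ i} y_k) ≤ exp (-c)`, so by the union
bound set `k` is selected with probability at most `c y_k + q exp (-c) y_k`, which is
`(1 + ln q) y_k` for `c = ln q`.
-/

open MeasureTheory ProbabilityTheory Real Finset

lemma one_sub_projIcc_le_exp_neg (x : ℝ) : 1 - (Set.projIcc 0 1 zero_le_one x : ℝ) ≤ exp (-x) := by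
  rw [Set.coe_projIcc]
  rcases le_total x 1 with hx | hx
  · rw [min_eq_right hx]
    linarith [le_max_right 0 x, add_one_le_exp (-x)]
  · rw [min_eq_left hx, max_eq_right zero_le_one, sub_self]
    exact (exp_pos _).le

lemma prod_one_sub_projIcc_le_exp_neg {ι : Type*} {c : ℝ} (hc : 0 ≤ c) (s : Finset ι)
    {y : ι → ℝ} (hs : 1 ≤ ∑ j ∈ s, y j) :
    ∏ j ∈ s, (1 - (Set.projIcc 0 1 zero_le_one (c * y j) : ℝ)) ≤ exp (-c) :=
  calc ∏ j ∈ s, (1 - (Set.projIcc 0 1 zero_le_one (c * y j) : ℝ))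
      ≤ ∏ j ∈ s, exp (-(c * y j)) :=
        prod_le_prod (fun j _ => unitInterval.one_minus_nonneg _)
          fun j _ => one_sub_projIcc_le_exp_neg _
    _ = exp (-(c * ∑ j ∈ s, y j)) := by rw [← exp_sum, mul_sum, sum_neg_distrib]
    _ ≤ exp (-c) := by gcongr; exact le_mul_of_one_le_right hc hs

lemma natCast_mul_exp_neg_log_le_one (n : ℕ) : (n : ℝ) * exp (-log n) ≤ 1 := by
  rcases n.eq_zero_or_pos with rfl | hn
  · simp
  · rw [exp_neg, exp_log (by positivity), mul_inv_cancel₀ (by positivity)]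

namespace SetCover

variable {ι κ : Type*} (U : κ → Finset ι) (y : κ → ℝ)

/-- `ω.1` records the first round; `ω.2 i` is the set item `i` falls back on, which counts only if
the first round leaves `i` uncovered. -/
abbrev Outcome := (κ → Bool) × ((i : ι) → {k // i ∈ U k})

def IsSelected (ω : Outcome U) (k : κ) : Prop :=
  ω.1 k = true ∨ ∃ i ∈ U k, (∀ j, i ∈ U j → ω.1 j = false) ∧ (ω.2 i : κ) = k

lemma exists_isSelected (ω : Outcome U) (i : ι) : ∃ k, i ∈ U k ∧ IsSelected U ω k := by
  by_cases h : ∃ k, i ∈ U k ∧ ω.1 k = true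
  · obtain ⟨k, hik, hk⟩ := h
    exact ⟨k, hik, .inl hk⟩
  · push Not at h
    exact ⟨ω.2 i, (ω.2 i).2, .inr ⟨i, (ω.2 i).2, fun j hj => by simpa using h j hj, rfl⟩⟩

lemma setOf_isSelected_subset (k : κ) :
    {ω | IsSelected U ω k} ⊆ {b : κ → Bool | b k = true} ×ˢ Set.univ ∪
      ⋃ i ∈ U k, {b : κ → Bool | ∀ j, i ∈ U j → b j = false} ×ˢ {σ | (σ i : κ) = k} := by
  rintro ω (hk | ⟨i, hik, hmiss, hσ⟩)
  · exact .inl ⟨hk, trivial⟩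
  · exact .inr (Set.mem_biUnion hik ⟨hmiss, hσ⟩)

noncomputable def firstRound (c : ℝ) (k : κ) : Measure Bool :=
  bernoulliMeasure true false (Set.projIcc 0 1 zero_le_one (c * y k))

instance (c : ℝ) (k : κ) : IsProbabilityMeasure (firstRound y c k) := by
  unfold firstRound
  infer_instance

variable [Fintype κ]

lemma pi_firstRound_real_le {c : ℝ} {k : κ} (hcy : 0 ≤ c * y k) :
    (Measure.pi (firstRound y c)).real {b | b k = true} ≤ c * y k := by
  change (Measure.pi (firstRound y c)).real (Function.eval k ⁻¹' {true}) ≤ _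
  rw [(measurePreserving_eval _ k).measureReal_preimage
      (measurableSet_singleton _).nullMeasurableSet, firstRound,
    bernoulliMeasure_real_apply_of_mem_of_notMem _ (measurableSet_singleton _) rfl (by simp),
    Set.coe_projIcc]
  exact max_le hcy (min_le_right _ _)

variable [DecidableEq ι]

def coverage (i : ι) : ℝ := ∑ k with i ∈ U k, y k

def IsFractionalCover : Prop := (∀ k, 0 ≤ y k) ∧ ∀ i, 1 ≤ coverage U y i

lemma sum_subtype_eq_coverage (i : ι) : ∑ k : {k // i ∈ U k}, y k = coverage U y i :=
  (sum_subtype _ (by simp) y).symm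

variable {U y}

lemma pi_firstRound_real_miss_le {c : ℝ} (hc : 0 ≤ c) {i : ι} (hi : 1 ≤ coverage U y i) :
    (Measure.pi (firstRound y c)).real {b | ∀ k, i ∈ U k → b k = false} ≤ exp (-c) := by
  have hmiss : {b : κ → Bool | ∀ k, i ∈ U k → b k = false} =
      (({k | i ∈ U k} : Finset κ) : Set κ).pi fun _ => {false} := by
    ext b
    simp
  rw [hmiss, measureReal_def, Measure.pi_pi_finset, ENNReal.toReal_prod]
  convert prod_one_sub_projIcc_le_exp_neg hc _ hi using 2 with k
  rw [← measureReal_def, firstRound,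
    bernoulliMeasure_real_apply_of_notMem_of_mem _ (measurableSet_singleton _) (by simp) rfl]

noncomputable def fallback (hy : IsFractionalCover U y) (i : ι) : PMF {k // i ∈ U k} :=
  PMF.ofFintype (fun k => ENNReal.ofReal (y k / coverage U y i)) <| by
    have hS : 0 < coverage U y i := one_pos.trans_le (hy.2 i)
    rw [← ENNReal.ofReal_sum_of_nonneg (f := fun k : {k // i ∈ U k} => y k / coverage U y i)
        fun k _ => div_nonneg (hy.1 k) hS.le,
      ← sum_div, sum_subtype_eq_coverage, div_self hS.ne', ENNReal.ofReal_one]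

variable [Fintype ι] [MeasurableSpace κ] [MeasurableSingletonClass κ]

lemma pi_fallback_real_le (hy : IsFractionalCover U y) {i : ι} {k : κ} (hik : i ∈ U k) :
    (Measure.pi fun i => (fallback hy i).toMeasure).real {σ | (σ i : κ) = k} ≤ y k := by
  have hσ : {σ : (i : ι) → {k // i ∈ U k} | (σ i : κ) = k} = Function.eval i ⁻¹' {⟨k, hik⟩} := by
    ext σ
    simp [Subtype.ext_iff]
  rw [hσ, (measurePreserving_eval _ i).measureReal_preimage
      (measurableSet_singleton _).nullMeasurableSet, measureReal_def,
    PMF.toMeasure_apply_singleton _ _ (measurableSet_singleton _)]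
  exact ENNReal.toReal_le_of_le_ofReal (hy.1 k) <|
    ENNReal.ofReal_le_ofReal (div_le_self (hy.1 k) (hy.2 i))

noncomputable def roundingMeasure (c : ℝ) (hy : IsFractionalCover U y) : Measure (Outcome U) :=
  (Measure.pi (firstRound y c)).prod (Measure.pi fun i => (fallback hy i).toMeasure)

instance (c : ℝ) (hy : IsFractionalCover U y) : IsProbabilityMeasure (roundingMeasure c hy) := by
  unfold roundingMeasure
  infer_instance

lemma roundingMeasure_real_isSelected_le {c : ℝ} (hc : 0 ≤ c) (hy : IsFractionalCover U y)
    (k : κ) :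
    (roundingMeasure c hy).real {ω | IsSelected U ω k} ≤
      (c + Fintype.card ι * exp (-c)) * y k := by
  have hcard : ((U k).card : ℝ) ≤ Fintype.card ι := by exact_mod_cast card_le_univ (U k)
  calc (roundingMeasure c hy).real {ω | IsSelected U ω k}
      ≤ (roundingMeasure c hy).real ({b : κ → Bool | b k = true} ×ˢ Set.univ) +
          ∑ i ∈ U k, (roundingMeasure c hy).real
            ({b : κ → Bool | ∀ j, i ∈ U j → b j = false} ×ˢ {σ | (σ i : κ) = k}) :=
        (measureReal_mono (setOf_isSelected_subset U k)).trans <|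
          (measureReal_union_le _ _).trans <| add_le_add le_rfl (measureReal_biUnion_finset_le _ _)
    _ ≤ c * y k + ∑ i ∈ U k, exp (-c) * y k := by
        simp only [roundingMeasure, measureReal_prod_prod, probReal_univ, mul_one]
        refine add_le_add (pi_firstRound_real_le y (mul_nonneg hc (hy.1 k)))
          (sum_le_sum fun i hi => ?_)
        exact mul_le_mul (pi_firstRound_real_miss_le hc (hy.2 i)) (pi_fallback_real_le hy hi)
          measureReal_nonneg (exp_pos _).le
    _ ≤ (c + Fintype.card ι * exp (-c)) * y k := by
        rw [sum_const, nsmul_eq_mul, add_mul, mul_assoc]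
        gcongr
        exact mul_nonneg (exp_pos _).le (hy.1 k)

end SetCover

open SetCover in
theorem stmt_15_general
    (q K : ℕ)
    (U : Fin K → Finset (Fin q))
    (y : Fin K → ℝ) (hy0 : ∀ k, 0 ≤ y k)
    (hcover : ∀ i, 1 ≤ ∑ k ∈ Finset.univ.filter (fun k => i ∈ U k), y k) :
    ∃ (Ω : Type) (_ : MeasurableSpace Ω) (μ : Measure Ω) (_ : IsProbabilityMeasure μ)
      (Y : Fin K → Ω → ℝ),
      (∀ k, Measurable (Y k))
      ∧ (∀ k ω, Y k ω = 0 ∨ Y k ω = 1)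
      ∧ (∀ᵐ ω ∂μ, ∀ i, ∃ k, i ∈ U k ∧ Y k ω = 1)
      ∧ (∀ k, ∫ ω, Y k ω ∂μ ≤ (1 + Real.log q) * y k) := by
  have hy : IsFractionalCover U y := ⟨hy0, hcover⟩
  have hmeas (s : Set (Outcome U)) : MeasurableSet s := s.toFinite.measurableSet
  refine ⟨Outcome U, inferInstance, roundingMeasure (log q) hy, inferInstance,
    fun k => {ω | IsSelected U ω k}.indicator 1, fun k => measurable_one.indicator (hmeas _),
    fun k ω => ?_, ae_of_all _ fun ω i => ?_, fun k => ?_⟩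
  · by_cases h : IsSelected U ω k <;> simp [h]
  · obtain ⟨k, hik, hk⟩ := exists_isSelected U ω i
    exact ⟨k, hik, by simp [hk]⟩
  · rw [integral_indicator_one (hmeas _)]
    calc _ ≤ (log q + q * exp (-log q)) * y k := by
          simpa using roundingMeasure_real_isSelected_le (log_natCast_nonneg q) hy k
      _ ≤ (1 + log q) * y k := by
          gcongr ?_ * _
          · exact hy0 k
          · linarith [natCast_mul_exp_neg_log_le_one q]

/-- a `(1 + ln q)`-competitive randomized rounding of any fractional
set cover: an integral random cover selecting each set with probability at most
`(1 + ln q)` times its fractional weight. -/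
theorem stmt_15
    (q K : ℕ) (hq : 1 ≤ q) (hK : 1 ≤ K)
    (U : Fin K → Finset (Fin q))
    (y : Fin K → ℝ) (hy0 : ∀ k, 0 ≤ y k)
    (hcover : ∀ i, 1 ≤ ∑ k ∈ Finset.univ.filter (fun k => i ∈ U k), y k) :
    ∃ (Ω : Type) (_ : MeasurableSpace Ω) (μ : Measure Ω) (_ : IsProbabilityMeasure μ)
      (Y : Fin K → Ω → ℝ),
      (∀ k, Measurable (Y k))
      ∧ (∀ k ω, Y k ω = 0 ∨ Y k ω = 1)
      ∧ (∀ᵐ ω ∂μ, ∀ i, ∃ k, i ∈ U k ∧ Y k ω = 1)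
      ∧ (∀ k, ∫ ω, Y k ω ∂μ ≤ (1 + Real.log q) * y k) :=
  stmt_15_general q K U y hy0 hcover
end
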